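/- Let m ≥ 1 and let y, z, y', z' be vertices of the doubled Odd graph 2.O_{m+1} (i.e., subsets of S of cardinality m or m+1). Then there exists a permutation σ of S with σ(x0) = x0 (setwise), σ(y) = y' and σ(z) = z' if and only if |y| = |y'|, |z| = |z'| and ρ(y,z) = ρ(y',z'). In other words, the orbits of the setwise stabilizer of x0 in Sym(S) acting diagonally on X × X are exactly the nonempty sets { (y,z) ∈ X × X : |y| = a, |z| = b, ρ(y,z) = q } for (a,b) ∈ {(m,m),(m,m+1),(m+1,m),(m+1,m+1)} and quadruples q. -/

import Mathlib

/-!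
Two finite families of subsets of a finite set are conjugate under a permutation exactly when
their Venn regions have pairwise equal sizes: a permutation is then glued together from
bijections between corresponding regions. By inclusion–exclusion the region sizes are determined
by the sizes of all intersections, and for the triple `(x0, y, z)` these are `|x0|`, `|y|`, `|z|`
and the four entries of `ρ(y, z)`.
-/

/-- The quadruple `ρ(y,z) = (|x0∩y|, |x0∩z|, |y∩z|, |x0∩y∩z|)`, with entries
viewed as integers. -/
def rho {n : ℕ} (x0 y z : Finset (Fin n)) : ℤ × ℤ × ℤ × ℤ :=
  (((x0 ∩ y).card : ℤ), ((x0 ∩ z).card : ℤ), ((y ∩ z).card : ℤ),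
    ((x0 ∩ y ∩ z).card : ℤ))

namespace Finset

theorem exists_perm_comp_eq_of_card_fiber_eq {α β : Type*} [Fintype α] [DecidableEq β]
    {p q : α → β} (h : ∀ b, #{a | p a = b} = #{a | q a = b}) :
    ∃ σ : Equiv.Perm α, ∀ a, q (σ a) = p a :=
  ⟨Equiv.ofFiberEquiv fun b => Fintype.equivOfCardEq <| by simpa [Fintype.card_subtype] using h b,
    Equiv.ofFiberEquiv_map _⟩

variable {α ι : Type*} [Fintype α] [DecidableEq α]

/-- The region inside `I` and outside `insert j J` is the region inside `I`, outside `J`, minus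
the one inside `insert j I`, outside `J`; induct on `J`. -/
theorem card_inf_sdiff_sup_eq_of_card_inf_eq {s t : ι → Finset α}
    (h : ∀ I : Finset ι, #(I.inf s) = #(I.inf t)) (I J : Finset ι) :
    #(I.inf s \ J.sup s) = #(I.inf t \ J.sup t) := by
  classical
  induction J using Finset.induction_on generalizing I with
  | empty => simpa using h I
  | insert j J _ ih =>
    have split (u : ι → Finset α) :
        #(I.inf u \ (insert j J).sup u) + #((insert j I).inf u \ J.sup u) =
          #(I.inf u \ J.sup u) := by
      rw [← card_sdiff_add_card_inter (I.inf u \ J.sup u) (u j), inf_insert, sup_insert]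
      congr 2 <;> ext a <;> simp only [mem_sdiff, mem_inter, inf_eq_inter, sup_eq_union,
        mem_union] <;> tauto
    have := split s
    have := split t
    have := ih I
    have := ih (insert j I)
    omega

theorem mem_inf_sdiff_sup_compl_iff [Fintype ι] [DecidableEq ι] {s : ι → Finset α}
    {K : Finset ι} {a : α} : a ∈ K.inf s \ Kᶜ.sup s ↔ ({i | a ∈ s i} : Finset ι) = K := by
  simp only [mem_sdiff, mem_inf, sup_eq_biUnion, mem_biUnion, mem_compl, not_exists, not_and,
    Finset.ext_iff, mem_filter, mem_univ, true_and]
  exact ⟨fun h i => ⟨fun hi => by_contra fun hK => h.2 i hK hi, h.1 i⟩,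
    fun h => ⟨fun i => (h i).2, fun i hK hi => hK ((h i).1 hi)⟩⟩

theorem exists_perm_image_eq_iff_card_inf_eq [Fintype ι] [DecidableEq ι] (s t : ι → Finset α) :
    (∃ σ : Equiv.Perm α, ∀ i, (s i).image σ = t i) ↔
      ∀ I : Finset ι, #(I.inf s) = #(I.inf t) := by
  constructor
  · rintro ⟨σ, hσ⟩ I
    rw [← card_image_of_injective _ σ.injective]
    congr 1
    ext b
    obtain ⟨a, rfl⟩ := σ.surjective b
    simp [mem_inf, ← hσ]
  · intro h
    have hfiber (u : ι → Finset α) (K : Finset ι) :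
        #{a | ({i | a ∈ u i} : Finset ι) = K} = #(K.inf u \ Kᶜ.sup u) := by
      congr 1
      ext a
      simp only [mem_filter, mem_univ, true_and, mem_inf_sdiff_sup_compl_iff]
    obtain ⟨σ, hσ⟩ := exists_perm_comp_eq_of_card_fiber_eq
      (p := fun a => ({i | a ∈ s i} : Finset ι)) (q := fun a => ({i | a ∈ t i} : Finset ι))
      fun K => by rw [hfiber, hfiber, card_inf_sdiff_sup_eq_of_card_inf_eq h]
    refine ⟨σ, fun i => ?_⟩
    ext b
    obtain ⟨a, rfl⟩ := σ.surjective b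
    simpa using (Finset.ext_iff.1 (hσ a) i).symm

theorem exists_perm_image_eq_iff_card_inter_eq (A B C A' B' C' : Finset α) :
    (∃ σ : Equiv.Perm α, A.image σ = A' ∧ B.image σ = B' ∧ C.image σ = C') ↔
      #A = #A' ∧ #B = #B' ∧ #C = #C' ∧ #(A ∩ B) = #(A' ∩ B') ∧ #(A ∩ C) = #(A' ∩ C') ∧
        #(B ∩ C) = #(B' ∩ C') ∧ #(A ∩ B ∩ C) = #(A' ∩ B' ∩ C') := by
  have hsubsets : ∀ I : Finset (Fin 3),
      I ∈ ({∅, {0}, {1}, {2}, {0, 1}, {0, 2}, {1, 2}, {0, 1, 2}} : Finset _) := by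
    decide
  have hfamily : (∃ σ : Equiv.Perm α, A.image σ = A' ∧ B.image σ = B' ∧ C.image σ = C') ↔
      ∃ σ : Equiv.Perm α, ∀ i, (![A, B, C] i).image σ = ![A', B', C'] i := by
    simp [Fin.forall_fin_succ]
  rw [hfamily, exists_perm_image_eq_iff_card_inf_eq]
  constructor
  · intro h
    refine ⟨?_, ?_, ?_, ?_, ?_, ?_, ?_⟩
    · simpa using h {0}
    · simpa using h {1}
    · simpa using h {2}
    · simpa using h {0, 1}
    · simpa using h {0, 2}
    · simpa using h {1, 2}
    · simpa [inter_assoc] using h {0, 1, 2}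
  · intro h I
    obtain rfl | rfl | rfl | rfl | rfl | rfl | rfl | rfl := by simpa using hsubsets I
    all_goals simp [h, ← inter_assoc]

end Finset

open Finset in
theorem stmt_7_general (m : ℕ) (x0 : Finset (Fin (2*m+1)))
    (y z y' z' : Finset (Fin (2*m+1))) :
    (∃ σ : Equiv.Perm (Fin (2*m+1)),
        x0.image σ = x0 ∧ y.image σ = y' ∧ z.image σ = z') ↔
      (y.card = y'.card ∧ z.card = z'.card ∧ rho x0 y z = rho x0 y' z') := by
  rw [exists_perm_image_eq_iff_card_inter_eq]
  simp only [rho, Prod.mk.injEq, Nat.cast_inj]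
  tauto

theorem stmt_7 (m : ℕ) (hm : 1 ≤ m) (x0 : Finset (Fin (2*m+1))) (hx0 : x0.card = m)
    (y z y' z' : Finset (Fin (2*m+1)))
    (hy : y.card = m ∨ y.card = m+1) (hz : z.card = m ∨ z.card = m+1)
    (hy' : y'.card = m ∨ y'.card = m+1) (hz' : z'.card = m ∨ z'.card = m+1) :
    (∃ σ : Equiv.Perm (Fin (2*m+1)),
        x0.image σ = x0 ∧ y.image σ = y' ∧ z.image σ = z') ↔
      (y.card = y'.card ∧ z.card = z'.card ∧ rho x0 y z = rho x0 y' z') :=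
  stmt_7_general m x0 y z y' z'
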